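/- arXiv:2311.05895 — 3 statements merged into one kernel-verified Lean document; each statement's English description precedes it below -/
import Mathlib

section
/- In the configuration of the previous statement, the circle ϖ'_{i,j} through L'_j, L'_i, M'_i, M'_j (centered at (i+j−1, 0) with radius √(1+(j−i)²)) intersects the circle k'_j (unit circle centered at (2j−1, 0)) at the point L'_j = (2j−1, 1), and the tangent of the angle between the two circles at this intersection point equals j − i. -/
open Metric EuclideanGeometry

noncomputable def pt (a b : ℝ) : EuclideanSpace ℝ (Fin 2) := !₂[a, b]

lemma dist_pt (a b c d : ℝ) : dist (pt a b) (pt c d) = √((a - c) ^ 2 + (b - d) ^ 2) := by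
  simp [EuclideanSpace.dist_eq, pt, Fin.sum_univ_two, Real.dist_eq, sq_abs]

lemma angle_pt_pt_pt_eq_pi_div_two (a b c e : ℝ) : ∠ (pt a b) (pt c b) (pt c e) = Real.pi / 2 := by
  rw [angle, ← InnerProductGeometry.inner_eq_zero_iff_angle_eq_pi_div_two]
  simp [pt, PiLp.inner_apply, Fin.sum_univ_two]

theorem stmt5_general (i j : ℕ) (hij : i < j) :
    let O₁ := pt (2 * (j : ℝ) - 1) 0
    let O₂ := pt ((i : ℝ) + (j : ℝ) - 1) 0
    let P := pt (2 * (j : ℝ) - 1) 1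
    P ∈ sphere O₁ 1 ∧
    P ∈ sphere O₂ (Real.sqrt (1 + ((j : ℝ) - (i : ℝ)) ^ 2)) ∧
    Real.tan (∠ O₁ P O₂) = (j : ℝ) - (i : ℝ) := by
  have hij' : (i : ℝ) < j := by exact_mod_cast hij
  refine ⟨?_, ?_, ?_⟩
  · rw [Metric.mem_sphere, dist_pt]
    norm_num
  · rw [Metric.mem_sphere, dist_pt]
    ring_nf
  · -- the triangle `O₂ O₁ P` has its right angle at `O₁`, with legs `j - i` and `1`
    rw [tan_angle_of_angle_eq_pi_div_two (angle_pt_pt_pt_eq_pi_div_two _ _ _ _), dist_pt, dist_pt]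
    norm_num [Real.sqrt_sq_eq_abs]
    rw [abs_sub_comm, abs_of_pos (by linarith)]
    ring

/-- The circle `ϖ'_{i,j}` centered at `(i+j-1, 0)` with radius `√(1+(j-i)²)` and the
unit circle `k'ⱼ` centered at `(2j-1, 0)` both pass through `L'ⱼ = (2j-1, 1)`, and the
tangent of the angle between the two circles there (the angle between the radii,
i.e. `∠ O₁ P O₂`) equals `j - i`. -/
theorem stmt5 (i j : ℕ) (hi : 1 ≤ i) (hij : i < j) :
    let O₁ := pt (2 * (j : ℝ) - 1) 0
    let O₂ := pt ((i : ℝ) + (j : ℝ) - 1) 0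
    let P := pt (2 * (j : ℝ) - 1) 1
    P ∈ sphere O₁ 1 ∧
    P ∈ sphere O₂ (Real.sqrt (1 + ((j : ℝ) - (i : ℝ)) ^ 2)) ∧
    Real.tan (∠ O₁ P O₂) = (j : ℝ) - (i : ℝ) :=
  stmt5_general i j hij
end

section
/- Let l₁ and m₁ be two circles tangent at a point W, with m₁ inside l₁. Suppose a circle l₂ is orthogonal to both l₁ and m₁. Then l₂ passes through W. -/
open Metric

/-!
The centre `O₃` of `l₂` has the same power `r₃²` with respect to `l₁` and `m₁`, so it lies on
their radical axis. For circles tangent at `W` the radical axis is the common tangent line at `W`,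
and the power of a point on the tangent at `W` is its squared distance to `W`; hence
`dist O₃ W ^ 2 = r₃ ^ 2`.
-/

namespace EuclideanGeometry.Sphere

open RealInnerProductSpace

variable {V P : Type*} [NormedAddCommGroup V] [InnerProductSpace ℝ V] [MetricSpace P]
  [NormedAddTorsor V P]

theorem power_eq_dist_sq_add_inner {s : Sphere P} {p : P} (hp : p ∈ s) (q : P) :
    s.power q = dist q p ^ 2 + 2 * ⟪q -ᵥ p, p -ᵥ s.center⟫ := by
  rw [power, ← mem_sphere.mp hp, dist_eq_norm_vsub V, dist_eq_norm_vsub V, dist_eq_norm_vsub V,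
    ← vsub_add_vsub_cancel q p s.center, norm_add_sq_real]
  ring

theorem IsIntTangentAt.mem_orthRadius_of_power_eq {s₁ s₂ : Sphere P} {p q : P}
    (h : s₁.IsIntTangentAt s₂ p) (hc : s₁.center ≠ s₂.center) (hq : s₁.power q = s₂.power q) :
    q ∈ s₂.orthRadius p := by
  obtain ⟨t, -, ht⟩ := h.wbtw
  have hc₁ : s₁.center -ᵥ s₂.center = t • (p -ᵥ s₂.center) := by
    rw [← ht, AffineMap.lineMap_vsub_left]
  have ht₀ : t ≠ 0 := by
    rintro rfl
    exact hc (by rw [← ht, AffineMap.lineMap_apply_zero])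
  -- Subtracting the two expansions of the power leaves the inner product with the line of centres.
  have hinner : ⟪q -ᵥ p, s₁.center -ᵥ s₂.center⟫ = 0 := by
    rw [power_eq_dist_sq_add_inner h.mem_left, power_eq_dist_sq_add_inner h.mem_right] at hq
    rw [← vsub_sub_vsub_cancel_left s₁.center s₂.center p, inner_sub_right]
    linarith
  rw [hc₁, inner_smul_right, mul_eq_zero] at hinner
  exact mem_orthRadius_iff_inner_left.mpr (hinner.resolve_left ht₀)

theorem IsIntTangentAt.dist_sq_eq_power_of_power_eq {s₁ s₂ : Sphere P} {p q : P}
    (h : s₁.IsIntTangentAt s₂ p) (hc : s₁.center ≠ s₂.center) (hq : s₁.power q = s₂.power q) :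
    dist q p ^ 2 = s₂.power q := by
  rw [power, dist_sq_eq_of_mem_orthRadius (h.mem_orthRadius_of_power_eq hc hq),
    mem_sphere.mp h.mem_right]
  ring

end EuclideanGeometry.Sphere

theorem stmt9_general (O₁ O₂ O₃ W : EuclideanSpace ℝ (Fin 2)) (r₁ r₂ r₃ : ℝ)
    (hr₁ : r₂ < r₁) (hr₃ : 0 < r₃)
    (hW₁ : W ∈ sphere O₁ r₁) (hW₂ : W ∈ sphere O₂ r₂)
    (htan : dist O₁ O₂ = r₁ - r₂)
    (horth₁ : dist O₃ O₁ ^ 2 = r₃ ^ 2 + r₁ ^ 2)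
    (horth₂ : dist O₃ O₂ ^ 2 = r₃ ^ 2 + r₂ ^ 2) :
    W ∈ sphere O₃ r₃ := by
  rw [mem_sphere] at hW₁ hW₂ ⊢
  have htangent : (⟨O₂, r₂⟩ : EuclideanGeometry.Sphere _).IsIntTangentAt ⟨O₁, r₁⟩ W := by
    refine ⟨hW₂, hW₁, ?_⟩
    rw [← dist_add_dist_eq_iff, htan, dist_comm O₂, hW₂, dist_comm O₁, hW₁]
    ring
  have hcentres : O₂ ≠ O₁ := by
    rintro rfl
    rw [dist_self] at htan
    linarith
  have hpowers : (⟨O₂, r₂⟩ : EuclideanGeometry.Sphere _).power O₃ = r₃ ^ 2 ∧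
      (⟨O₁, r₁⟩ : EuclideanGeometry.Sphere _).power O₃ = r₃ ^ 2 := by
    simp only [EuclideanGeometry.Sphere.power]
    constructor <;> linarith
  have hdist : dist O₃ W ^ 2 = r₃ ^ 2 := by
    rw [htangent.dist_sq_eq_power_of_power_eq hcentres (hpowers.1.trans hpowers.2.symm)]
    exact hpowers.2
  rw [dist_comm]
  exact (pow_left_inj₀ dist_nonneg hr₃.le two_ne_zero).mp hdist

/-- If `l₁` (center `O₁`, radius `r₁`) and `m₁` (center `O₂`, radius `r₂`) are
internally tangent at `W` (with `m₁` inside `l₁`), and a circle `l₂` (center `O₃`,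
radius `r₃`) is orthogonal to both (`|O₃O₁|² = r₃² + r₁²` and `|O₃O₂|² = r₃² + r₂²`),
then `l₂` passes through `W`. -/
theorem stmt9 (O₁ O₂ O₃ W : EuclideanSpace ℝ (Fin 2)) (r₁ r₂ r₃ : ℝ)
    (hr₂ : 0 < r₂) (hr₁ : r₂ < r₁) (hr₃ : 0 < r₃)
    (hW₁ : W ∈ sphere O₁ r₁) (hW₂ : W ∈ sphere O₂ r₂)
    (htan : dist O₁ O₂ = r₁ - r₂)
    (horth₁ : dist O₃ O₁ ^ 2 = r₃ ^ 2 + r₁ ^ 2)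
    (horth₂ : dist O₃ O₂ ^ 2 = r₃ ^ 2 + r₂ ^ 2) :
    W ∈ sphere O₃ r₃ :=
  stmt9_general O₁ O₂ O₃ W r₁ r₂ r₃ hr₁ hr₃ hW₁ hW₂ htan horth₁ horth₂
end

section
/- Let l and k be circles with l strictly inside k (not concentric, non-intersecting), and let m₁ and m₂ be two circles each orthogonal to both l and k. Then m₁ and m₂ intersect in exactly two points. -/
set_option maxHeartbeats 1000000


open Metric

open scoped RealInnerProductSpace

/-- Let `l` (center `Oₗ`, radius `rₗ`) lie strictly inside `k` (center `Oₖ`, radius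
`rₖ`), not concentric. If `m₁` and `m₂` are two distinct circles each orthogonal to
both `l` and `k`, then `m₁` and `m₂` intersect in exactly two points. -/
theorem stmt11 (Ol Ok O₁ O₂ : EuclideanSpace ℝ (Fin 2)) (rl rk ρ₁ ρ₂ : ℝ)
    (hrl : 0 < rl) (hrk : 0 < rk) (hρ₁ : 0 < ρ₁) (hρ₂ : 0 < ρ₂)
    (hinside : dist Ol Ok + rl < rk) (hcon : Ol ≠ Ok)
    (hne : O₁ ≠ O₂ ∨ ρ₁ ≠ ρ₂)
    (h₁l : dist O₁ Ol ^ 2 = ρ₁ ^ 2 + rl ^ 2)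
    (h₁k : dist O₁ Ok ^ 2 = ρ₁ ^ 2 + rk ^ 2)
    (h₂l : dist O₂ Ol ^ 2 = ρ₂ ^ 2 + rl ^ 2)
    (h₂k : dist O₂ Ok ^ 2 = ρ₂ ^ 2 + rk ^ 2) :
    ∃ P Q : EuclideanSpace ℝ (Fin 2), P ≠ Q ∧
      sphere O₁ ρ₁ ∩ sphere O₂ ρ₂ = {P, Q} := by
  -- basic reformulations
  set v : EuclideanSpace ℝ (Fin 2) := Ok - Ol with hv_def
  have hv : v ≠ 0 := sub_ne_zero.mpr (Ne.symm hcon)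
  set d : ℝ := ‖v‖ with hd_def
  have hd : 0 < d := norm_pos_iff.mpr hv
  have hdOlOk : dist Ol Ok = d := by rw [dist_eq_norm, ← norm_neg]; congr 1; simp [hv_def]
  have hvv : ⟪v, v⟫ = d ^ 2 := by
    rw [real_inner_self_eq_norm_sq]
  -- rewrite the orthogonality hypotheses via norms
  have h₁l' : ‖O₁ - Ol‖ ^ 2 = ρ₁ ^ 2 + rl ^ 2 := by rwa [dist_eq_norm] at h₁l
  have h₁k' : ‖O₁ - Ok‖ ^ 2 = ρ₁ ^ 2 + rk ^ 2 := by rwa [dist_eq_norm] at h₁k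
  have h₂l' : ‖O₂ - Ol‖ ^ 2 = ρ₂ ^ 2 + rl ^ 2 := by rwa [dist_eq_norm] at h₂l
  have h₂k' : ‖O₂ - Ok‖ ^ 2 = ρ₂ ^ 2 + rk ^ 2 := by rwa [dist_eq_norm] at h₂k
  set c : ℝ := (d ^ 2 + rl ^ 2 - rk ^ 2) / 2 with hc_def
  -- the component of `Oᵢ - Ol` along `v` is `c / d` (unnormalized: inner = c)
  have key : ∀ (O : EuclideanSpace ℝ (Fin 2)) (ρ : ℝ),
      ‖O - Ol‖ ^ 2 = ρ ^ 2 + rl ^ 2 → ‖O - Ok‖ ^ 2 = ρ ^ 2 + rk ^ 2 →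
      ⟪O - Ol, v⟫ = c := by
    intro O ρ hl hk
    have hexp : ‖(O - Ol) - v‖ ^ 2
        = ‖O - Ol‖ ^ 2 - 2 * ⟪O - Ol, v⟫ + ‖v‖ ^ 2 := by
      rw [norm_sub_sq_real]
    have : (O - Ol) - v = O - Ok := by simp [hv_def]
    rw [this, hk, hl] at hexp
    have : ‖v‖ ^ 2 = d ^ 2 := by rw [hd_def]
    rw [this] at hexp
    rw [hc_def]; linarith
  have hA₁ : ⟪O₁ - Ol, v⟫ = c := key O₁ ρ₁ h₁l' h₁k'
  have hA₂ : ⟪O₂ - Ol, v⟫ = c := key O₂ ρ₂ h₂l' h₂k'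
  -- c is very negative: c < - d * rl, so c^2 > d^2 rl^2
  have hdrl : 0 < d * rl := mul_pos hd hrl
  have hcneg : c < - (d * rl) := by
    rw [hdOlOk] at hinside
    have h1 : (d + rl) * (d + rl) < rk * rk :=
      mul_self_lt_mul_self (by positivity) hinside
    have h2 : (d + rl) * (d + rl) = d ^ 2 + 2 * (d * rl) + rl ^ 2 := by ring
    have h3 : rk * rk = rk ^ 2 := by ring
    rw [h2, h3] at h1
    rw [hc_def]; linarith
  have hdisc : 0 < c ^ 2 - d ^ 2 * rl ^ 2 := by
    have hp : 0 < -c - d * rl := by linarith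
    have hq2 : 0 < -c + d * rl := by linarith
    have hprod := mul_pos hp hq2
    have e : (-c - d * rl) * (-c + d * rl) = c ^ 2 - d ^ 2 * rl ^ 2 := by ring
    linarith
  set s : ℝ := Real.sqrt (c ^ 2 - d ^ 2 * rl ^ 2) with hs_def
  have hs : 0 < s := Real.sqrt_pos.mpr hdisc
  have hs2 : s ^ 2 = c ^ 2 - d ^ 2 * rl ^ 2 := Real.sq_sqrt hdisc.le
  set t₁ : ℝ := (c + s) / d ^ 2 with ht₁_def
  set t₂ : ℝ := (c - s) / d ^ 2 with ht₂_def
  have hd2 : (d:ℝ) ^ 2 ≠ 0 := by positivity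
  have ht₁e : t₁ * d ^ 2 = c + s := by rw [ht₁_def]; field_simp
  have ht₂e : t₂ * d ^ 2 = c - s := by rw [ht₂_def]; field_simp
  have hroot₁ : t₁ ^ 2 * d ^ 2 - 2 * t₁ * c + rl ^ 2 = 0 := by
    have e : d ^ 2 * (t₁ ^ 2 * d ^ 2 - 2 * t₁ * c + rl ^ 2)
        = (t₁ * d ^ 2) ^ 2 - 2 * (t₁ * d ^ 2) * c + rl ^ 2 * d ^ 2 := by ring
    rw [ht₁e] at e
    have e2 : (c + s) ^ 2 - 2 * (c + s) * c + rl ^ 2 * d ^ 2 = 0 := by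
      linear_combination hs2
    rw [e2] at e
    exact (mul_eq_zero.mp e).resolve_left hd2
  have hroot₂ : t₂ ^ 2 * d ^ 2 - 2 * t₂ * c + rl ^ 2 = 0 := by
    have e : d ^ 2 * (t₂ ^ 2 * d ^ 2 - 2 * t₂ * c + rl ^ 2)
        = (t₂ * d ^ 2) ^ 2 - 2 * (t₂ * d ^ 2) * c + rl ^ 2 * d ^ 2 := by ring
    rw [ht₂e] at e
    have e2 : (c - s) ^ 2 - 2 * (c - s) * c + rl ^ 2 * d ^ 2 = 0 := by
      linear_combination hs2
    rw [e2] at e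
    exact (mul_eq_zero.mp e).resolve_left hd2
  set P : EuclideanSpace ℝ (Fin 2) := Ol + t₁ • v with hP_def
  set Q : EuclideanSpace ℝ (Fin 2) := Ol + t₂ • v with hQ_def
  have ht₁₂ : t₁ ≠ t₂ := by
    intro h
    have e : c + s = c - s := by rw [← ht₁e, ← ht₂e, h]
    linarith
  have hPQ : P ≠ Q := by
    rw [hP_def, hQ_def]
    intro h
    have h2 : t₁ • v = t₂ • v := by
      have := add_left_cancel h
      exact this
    exact ht₁₂ (smul_left_injective ℝ hv h2)
  -- a point of the form Ol + t • v is on sphere Oᵢ ρᵢ iff the quadratic vanishes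
  have onsphere : ∀ (t : ℝ) (O : EuclideanSpace ℝ (Fin 2)) (ρ : ℝ), 0 < ρ →
      ‖O - Ol‖ ^ 2 = ρ ^ 2 + rl ^ 2 → ⟪O - Ol, v⟫ = c →
      (t ^ 2 * d ^ 2 - 2 * t * c + rl ^ 2 = 0 ↔ dist (Ol + t • v) O = ρ) := by
    intro t O ρ hρ hl hA
    have hrewrite : Ol + t • v - O = t • v - (O - Ol) := by abel
    have hnorm : ‖Ol + t • v - O‖ ^ 2 = t ^ 2 * d ^ 2 - 2 * t * c + ρ ^ 2 + rl ^ 2 := by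
      have h1 : ‖t • v‖ ^ 2 = t ^ 2 * d ^ 2 := by
        rw [norm_smul, Real.norm_eq_abs, mul_pow, sq_abs, ← hd_def]
      have h2 : ⟪t • v, O - Ol⟫ = t * c := by
        rw [real_inner_smul_left, real_inner_comm (O - Ol) v, hA]
      rw [hrewrite, norm_sub_sq_real, h1, h2, hl]
      ring
    constructor
    · intro hq
      have hsq : ‖Ol + t • v - O‖ ^ 2 = ρ ^ 2 := by rw [hnorm]; linarith
      have hnn : (0:ℝ) ≤ ‖Ol + t • v - O‖ := norm_nonneg _
      rw [dist_eq_norm, ← Real.sqrt_sq hnn, hsq, Real.sqrt_sq hρ.le]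
    · intro hq
      rw [dist_eq_norm] at hq
      rw [hq] at hnorm
      linarith
  have hPmem₁ : dist P O₁ = ρ₁ := (onsphere t₁ O₁ ρ₁ hρ₁ h₁l' hA₁).mp hroot₁
  have hPmem₂ : dist P O₂ = ρ₂ := (onsphere t₁ O₂ ρ₂ hρ₂ h₂l' hA₂).mp hroot₁
  have hQmem₁ : dist Q O₁ = ρ₁ := (onsphere t₂ O₁ ρ₁ hρ₁ h₁l' hA₁).mp hroot₂
  have hQmem₂ : dist Q O₂ = ρ₂ := (onsphere t₂ O₂ ρ₂ hρ₂ h₂l' hA₂).mp hroot₂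
  -- O₁ ≠ O₂
  have hO : O₁ ≠ O₂ := by
    rcases hne with h | h
    · exact h
    · intro heq
      apply h
      have hsq : ρ₁ ^ 2 = ρ₂ ^ 2 := by
        rw [heq] at h₁l'
        rw [h₁l'] at h₂l'
        linarith
      have hfac2 : (ρ₁ - ρ₂) * (ρ₁ + ρ₂) = 0 := by linear_combination hsq
      rcases mul_eq_zero.mp hfac2 with h' | h'
      · linarith
      · linarith
  set w : EuclideanSpace ℝ (Fin 2) := O₁ - O₂ with hw_def
  have hw : w ≠ 0 := sub_ne_zero.mpr hO
  have hwv : ⟪v, w⟫ = 0 := by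
    rw [real_inner_comm w v]
    have hw' : w = (O₁ - Ol) - (O₂ - Ol) := by rw [hw_def]; abel
    rw [hw', inner_sub_left, hA₁, hA₂]
    ring
  -- the orthogonal complement of span w is exactly span v
  have hspan : (ℝ ∙ w)ᗮ = ℝ ∙ v := by
    have hle : (Submodule.span ℝ {v}) ≤ (ℝ ∙ w)ᗮ := by
      rw [Submodule.span_singleton_le_iff_mem,
        Submodule.mem_orthogonal_singleton_iff_inner_right]
      rwa [real_inner_comm] at hwv
    have h1 : Module.finrank ℝ (ℝ ∙ w) = 1 := finrank_span_singleton hw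
    have h2 : Module.finrank ℝ (ℝ ∙ v) = 1 := finrank_span_singleton hv
    have htot : Module.finrank ℝ (ℝ ∙ w) + Module.finrank ℝ (ℝ ∙ w)ᗮ
        = Module.finrank ℝ (EuclideanSpace ℝ (Fin 2)) :=
      Submodule.finrank_add_finrank_orthogonal _
    rw [finrank_euclideanSpace_fin, h1] at htot
    have h3 : Module.finrank ℝ (ℝ ∙ w)ᗮ = 1 := by omega
    exact (Submodule.eq_of_le_of_finrank_le hle (by rw [h2, h3])).symm
  -- uniqueness
  refine ⟨P, Q, hPQ, ?_⟩
  ext X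
  simp only [Set.mem_inter_iff, mem_sphere_iff_norm, Set.mem_insert_iff,
    Set.mem_singleton_iff]
  constructor
  · rintro ⟨hX₁, hX₂⟩
    have hX₁' : ‖X - O₁‖ ^ 2 = ρ₁ ^ 2 := by rw [hX₁]
    have hX₂' : ‖X - O₂‖ ^ 2 = ρ₂ ^ 2 := by rw [hX₂]
    -- X - Ol is orthogonal to w
    have hXw : ⟪X - Ol, w⟫ = 0 := by
      have e₁ : ‖(X - Ol) - (O₁ - Ol)‖ ^ 2
          = ‖X - Ol‖ ^ 2 - 2 * ⟪X - Ol, O₁ - Ol⟫ + ‖O₁ - Ol‖ ^ 2 := by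
        rw [norm_sub_sq_real]
      have e₂ : ‖(X - Ol) - (O₂ - Ol)‖ ^ 2
          = ‖X - Ol‖ ^ 2 - 2 * ⟪X - Ol, O₂ - Ol⟫ + ‖O₂ - Ol‖ ^ 2 := by
        rw [norm_sub_sq_real]
      have r₁ : (X - Ol) - (O₁ - Ol) = X - O₁ := by abel
      have r₂ : (X - Ol) - (O₂ - Ol) = X - O₂ := by abel
      rw [r₁, hX₁', h₁l'] at e₁
      rw [r₂, hX₂', h₂l'] at e₂
      have hw' : w = (O₁ - Ol) - (O₂ - Ol) := by rw [hw_def]; abel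
      rw [hw', inner_sub_right]
      linarith
    -- hence X - Ol ∈ span v
    have hXmem : X - Ol ∈ ℝ ∙ v := by
      rw [← hspan, Submodule.mem_orthogonal_singleton_iff_inner_left]
      exact hXw
    obtain ⟨t, ht⟩ := Submodule.mem_span_singleton.mp hXmem
    have hXeq : X = Ol + t • v := by rw [ht]; abel
    -- X satisfies the quadratic
    have hq : t ^ 2 * d ^ 2 - 2 * t * c + rl ^ 2 = 0 := by
      apply (onsphere t O₁ ρ₁ hρ₁ h₁l' hA₁).mpr
      rw [dist_eq_norm, ← hXeq, hX₁]
    -- factor the quadratic: roots are t₁, t₂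
    have hfac : d ^ 2 * (t - t₁) * (t - t₂) = 0 := by
      have e : d ^ 2 * (d ^ 2 * (t - t₁) * (t - t₂))
          = (t * d ^ 2 - t₁ * d ^ 2) * (t * d ^ 2 - t₂ * d ^ 2) := by ring
      rw [ht₁e, ht₂e] at e
      have e2 : (t * d ^ 2 - (c + s)) * (t * d ^ 2 - (c - s))
          = d ^ 2 * (t ^ 2 * d ^ 2 - 2 * t * c + rl ^ 2) := by
        linear_combination (-1 : ℝ) * hs2
      rw [e2, hq, mul_zero] at e
      exact (mul_eq_zero.mp e).resolve_left hd2
    rcases mul_eq_zero.mp hfac with h | h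
    · rcases mul_eq_zero.mp h with h' | h'
      · exact absurd h' hd2
      · left
        rw [hXeq, hP_def, sub_eq_zero.mp h']
    · right
      rw [hXeq, hQ_def, sub_eq_zero.mp h]
  · rintro (rfl | rfl)
    · exact ⟨by rw [← dist_eq_norm]; exact hPmem₁, by rw [← dist_eq_norm]; exact hPmem₂⟩
    · exact ⟨by rw [← dist_eq_norm]; exact hQmem₁, by rw [← dist_eq_norm]; exact hQmem₂⟩
end
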